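/- Suppose σ and σ̃ are k-simplices in ℝ^m with corresponding vertices satisfying |‖pᵢ − pⱼ‖ − ‖p̃ᵢ − p̃ⱼ‖| ≤ ξ₀·L(σ) for all i < j. If ξ₀ ≤ (t(σ)/4)², then the circumradii satisfy |R(σ̃) − R(σ)| ≤ 16·k^{3/2}·R(σ)·ξ₀/t(σ)³. -/

import Mathlib

/-
Write the circumcentres in the edge bases, `c - p 0 = ∑ j, a j • (p j.succ - p 0)` and likewise
`c' - q 0` with coefficients `b`. Equidistance from the vertices becomes the linear systems
`G a = diag G / 2`, `H b = diag H / 2` for the Gram matrices `G`, `H` of the edge vectors, with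
`R ^ 2 = a ⬝ᵥ G a` and `R' ^ 2 = b ⬝ᵥ H b`. The distortion hypothesis bounds the entries of `G - H`
by `δ = 99/32 ξ₀ L²`, and
`R' ^ 2 - R ^ 2 = (a + b) ⬝ᵥ (diag H - diag G) / 2 + a ⬝ᵥ (G - H) b`,
so it remains to bound the ℓ¹-norms of `a` and `b`. Thickness makes `G` coercive,
`t L ‖x‖₁ ≤ ‖∑ j, x j • (p j.succ - p 0)‖`, because each coefficient is controlled by the altitude
of its vertex. This gives `‖a‖₁ ≤ R / (t L)` directly and, through the expansion of
`(b - a) ⬝ᵥ G (b - a)`, `‖b‖₁ ≤ 3 R / (2 t L)`; altogether `|R' - R| ≤ 4 δ R / (t L)²`.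
-/

open Matrix Metric
open scoped Classical BigOperators

noncomputable section

/-- Euclidean space ℝ^m. -/
abbrev E (m : ℕ) := EuclideanSpace ℝ (Fin m)

/-- Euclidean norm of a plain vector. -/
noncomputable def euclNorm {n : ℕ} (v : Fin n → ℝ) : ℝ := Real.sqrt (∑ i, v i ^ 2)

/-- Largest singular value (operator norm) of a matrix. -/
noncomputable def largeSV {m k : ℕ} (P : Matrix (Fin m) (Fin k) ℝ) : ℝ :=
  ⨆ x : {x : Fin k → ℝ // euclNorm x = 1}, euclNorm (P.mulVec x)

/-- Smallest singular value of a matrix. -/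
noncomputable def smallSV {m k : ℕ} (P : Matrix (Fin m) (Fin k) ℝ) : ℝ :=
  ⨅ x : {x : Fin k → ℝ // euclNorm x = 1}, euclNorm (P.mulVec x)

/-- Matrix of edge vectors pᵢ − p₀ of a k-simplex. -/
noncomputable def vertMatrix {m k : ℕ} (p : Fin (k+1) → E m) : Matrix (Fin m) (Fin k) ℝ :=
  fun a j => p j.succ a - p 0 a

/-- Pseudo-inverse (PᵀP)⁻¹Pᵀ of a matrix of full column rank. -/
noncomputable def pseudoInv {m k : ℕ} (P : Matrix (Fin m) (Fin k) ℝ) :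
    Matrix (Fin k) (Fin m) ℝ := (Pᵀ * P)⁻¹ * Pᵀ

/-- Longest edge length of a simplex given by its vertices. -/
noncomputable def longEdge {m k : ℕ} (p : Fin (k+1) → E m) : ℝ :=
  ⨆ i, ⨆ j, dist (p i) (p j)

/-- Altitude of vertex i: distance to affine hull of the opposite facet. -/
noncomputable def altitude {m k : ℕ} (p : Fin (k+1) → E m) (i : Fin (k+1)) : ℝ :=
  Metric.infDist (p i) (↑(affineSpan ℝ (p '' {j | j ≠ i})) : Set (E m))

/-- Thickness of a k-simplex: 1 if k = 0, else min altitude / (k · longest edge). -/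
noncomputable def thickness {m k : ℕ} (p : Fin (k+1) → E m) : ℝ :=
  if k = 0 then 1 else (⨅ i, altitude p i) / (k * longEdge p)

/-- Longest edge of a finite vertex set. -/
noncomputable def fLongEdge {m : ℕ} (s : Finset (E m)) : ℝ := Metric.diam (s : Set (E m))

/-- Minimal altitude of a finite vertex set. -/
noncomputable def fMinAlt {m : ℕ} (s : Finset (E m)) : ℝ :=
  ⨅ p : {p // p ∈ s},
    Metric.infDist (p : E m) (↑(affineSpan ℝ ((s.erase (p : E m)) : Set (E m))) : Set (E m))

/-- Thickness of a simplex given as a finite vertex set. -/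
noncomputable def fThickness {m : ℕ} (s : Finset (E m)) : ℝ :=
  if s.card ≤ 1 then 1 else fMinAlt s / ((s.card - 1 : ℕ) * fLongEdge s)

/-- A simplex (finite vertex set) is Γ₀-good if every j-face has thickness ≥ Γ₀^j. -/
def isGood {m : ℕ} (Γ₀ : ℝ) (s : Finset (E m)) : Prop :=
  ∀ t ⊆ s, t.Nonempty → fThickness t ≥ Γ₀ ^ (t.card - 1)

/-- A Γ₀-flake: not Γ₀-good, but every facet is Γ₀-good. -/
def isFlake {m : ℕ} (Γ₀ : ℝ) (s : Finset (E m)) : Prop :=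
  ¬ isGood Γ₀ s ∧ ∀ p ∈ s, isGood Γ₀ (s.erase p)

namespace Matrix

variable {n : Type*} {G H : Matrix n n ℝ} {a b : n → ℝ} {δ : ℝ}

theorem abs_half_diag_sub_le (hGH : ∀ i j, |G i j - H i j| ≤ δ) (i : n) :
    |((2 : ℝ)⁻¹ • (diag H - diag G)) i| ≤ δ / 2 := by
  have := hGH i i
  rw [abs_sub_comm] at this
  simp only [Pi.smul_apply, Pi.sub_apply, diag_apply, smul_eq_mul, abs_mul, abs_inv,
    abs_two]
  linarith

variable [Fintype n]

theorem abs_dotProduct_le {d : n → ℝ} (hd : ∀ i, |d i| ≤ δ) (x : n → ℝ) :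
    |x ⬝ᵥ d| ≤ δ * ∑ i, |x i| := by
  rw [Finset.mul_sum]
  refine (Finset.abs_sum_le_sum_abs _ _).trans (Finset.sum_le_sum fun i _ => ?_)
  rw [abs_mul, mul_comm]
  exact mul_le_mul_of_nonneg_right (hd i) (abs_nonneg _)

theorem abs_dotProduct_mulVec_le {M : Matrix n n ℝ} (hM : ∀ i j, |M i j| ≤ δ)
    (x y : n → ℝ) : |x ⬝ᵥ M *ᵥ y| ≤ δ * (∑ i, |x i|) * ∑ j, |y j| := by
  have hMy : ∀ i, |(M *ᵥ y) i| ≤ δ * ∑ j, |y j| := fun i => by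
    simpa only [mulVec, dotProduct_comm (M i)] using abs_dotProduct_le (hM i) y
  calc |x ⬝ᵥ M *ᵥ y| ≤ (δ * ∑ j, |y j|) * ∑ i, |x i| := abs_dotProduct_le hMy x
    _ = δ * (∑ i, |x i|) * ∑ j, |y j| := by ring

theorem dotProduct_mulVec_sub_dotProduct_mulVec (hG : G.IsSymm)
    (ha : G *ᵥ a = (2 : ℝ)⁻¹ • diag G) (hb : H *ᵥ b = (2 : ℝ)⁻¹ • diag H) :
    b ⬝ᵥ H *ᵥ b - a ⬝ᵥ G *ᵥ a =
      (a + b) ⬝ᵥ ((2 : ℝ)⁻¹ • (diag H - diag G)) + a ⬝ᵥ (G - H) *ᵥ b := by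
  have hGab : a ⬝ᵥ G *ᵥ b = b ⬝ᵥ G *ᵥ a := by
    rw [dotProduct_mulVec, ← mulVec_transpose, hG.eq, dotProduct_comm]
  rw [sub_mulVec, dotProduct_sub, hGab, ha, hb]
  simp only [smul_sub, dotProduct_sub, add_dotProduct, dotProduct_smul]
  ring

theorem sub_dotProduct_mulVec_sub (ha : G *ᵥ a = (2 : ℝ)⁻¹ • diag G)
    (hb : H *ᵥ b = (2 : ℝ)⁻¹ • diag H) :
    (b - a) ⬝ᵥ G *ᵥ (b - a) =
      (b - a) ⬝ᵥ ((G - H) *ᵥ b + (2 : ℝ)⁻¹ • (diag H - diag G)) := by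
  rw [mulVec_sub, sub_mulVec, ha, hb, smul_sub]
  abel_nf

theorem abs_dotProduct_mulVec_sub_le (hG : G.IsSymm)
    (ha : G *ᵥ a = (2 : ℝ)⁻¹ • diag G) (hb : H *ᵥ b = (2 : ℝ)⁻¹ • diag H)
    (hGH : ∀ i j, |G i j - H i j| ≤ δ) :
    |b ⬝ᵥ H *ᵥ b - a ⬝ᵥ G *ᵥ a| ≤
      δ * ((∑ i, |a i| + ∑ i, |b i|) / 2 + (∑ i, |a i|) * ∑ i, |b i|) := by
  have hGH' : ∀ i j, |(G - H) i j| ≤ δ := hGH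
  have hda := abs_dotProduct_le (abs_half_diag_sub_le hGH) a
  have hdb := abs_dotProduct_le (abs_half_diag_sub_le hGH) b
  have hab := abs_dotProduct_mulVec_le hGH' a b
  rw [dotProduct_mulVec_sub_dotProduct_mulVec hG ha hb, add_dotProduct]
  set d := (2 : ℝ)⁻¹ • (diag H - diag G)
  have h1 := abs_add_le (a ⬝ᵥ d + b ⬝ᵥ d) (a ⬝ᵥ (G - H) *ᵥ b)
  have h2 := abs_add_le (a ⬝ᵥ d) (b ⬝ᵥ d)
  linarith

theorem mul_sum_abs_sub_le {κ : ℝ} (hδ : 0 ≤ δ)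
    (hcoer : ∀ x, (κ * ∑ i, |x i|) ^ 2 ≤ x ⬝ᵥ G *ᵥ x)
    (ha : G *ᵥ a = (2 : ℝ)⁻¹ • diag G) (hb : H *ᵥ b = (2 : ℝ)⁻¹ • diag H)
    (hGH : ∀ i j, |G i j - H i j| ≤ δ) :
    κ ^ 2 * ∑ i, |b i - a i| ≤ δ * (∑ i, |b i| + 1 / 2) := by
  set d := ∑ i, |b i - a i|
  have hd : 0 ≤ d := Finset.sum_nonneg fun i _ => abs_nonneg _
  have hGH' : ∀ i j, |(G - H) i j| ≤ δ := hGH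
  have key : (κ * d) ^ 2 ≤ d * (δ * (∑ i, |b i| + 1 / 2)) := by
    have h1 := hcoer (b - a)
    rw [sub_dotProduct_mulVec_sub ha hb, dotProduct_add] at h1
    have h2 := (le_abs_self _).trans (abs_dotProduct_mulVec_le hGH' (b - a) b)
    have h3 := (le_abs_self _).trans (abs_dotProduct_le (abs_half_diag_sub_le hGH) (b - a))
    simp only [Pi.sub_apply] at h1 h2 h3
    nlinarith
  rcases hd.eq_or_lt with h0 | h0
  · rw [← h0, mul_zero]; positivity
  · nlinarith

theorem abs_sub_mul_sq_le_of_coercive {κ R R' : ℝ} (hG : G.IsSymm)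
    (hcoer : ∀ x, (κ * ∑ i, |x i|) ^ 2 ≤ x ⬝ᵥ G *ᵥ x)
    (ha : G *ᵥ a = (2 : ℝ)⁻¹ • diag G) (hb : H *ᵥ b = (2 : ℝ)⁻¹ • diag H)
    (hGH : ∀ i j, |G i j - H i j| ≤ δ) (hδ : 0 ≤ δ) (hκ : 0 < κ) (hδκ : 5 * δ ≤ κ ^ 2)
    (hR : R ^ 2 = a ⬝ᵥ G *ᵥ a) (hR' : R' ^ 2 = b ⬝ᵥ H *ᵥ b) (hR'0 : 0 ≤ R')
    (hκR : κ ≤ 2 * R) : |R' - R| * κ ^ 2 ≤ 4 * δ * R := by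
  set A := ∑ i, |a i|
  set B := ∑ i, |b i|
  have hA0 : 0 ≤ A := Finset.sum_nonneg fun i _ => abs_nonneg _
  have hB0 : 0 ≤ B := Finset.sum_nonneg fun i _ => abs_nonneg _
  have hR0 : 0 < R := by linarith
  have hA : κ * A ≤ R := by
    rw [← sq_le_sq₀ (by positivity) hR0.le, hR]
    exact hcoer a
  have hBA : B ≤ A + ∑ i, |b i - a i| := by
    rw [← Finset.sum_add_distrib]
    exact Finset.sum_le_sum fun i _ => by linarith [abs_sub_abs_le_abs_sub (b i) (a i)]
  have hB : κ * B ≤ 3 / 2 * R := by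
    -- `κ² (B - A) ≤ δ (B + 1/2)` together with `5 δ ≤ κ²` leaves `4 B ≤ 5 A + 1/2`
    have := mul_sum_abs_sub_le hδ hcoer ha hb hGH
    have : κ ^ 2 * (4 * B - 5 * A) ≤ κ ^ 2 / 2 := by nlinarith
    have : κ * (4 * B - 5 * A) ≤ κ / 2 := by nlinarith
    linarith
  have hsq : |R' ^ 2 - R ^ 2| * κ ^ 2 ≤ 4 * δ * R ^ 2 := by
    rw [hR, hR']
    have := mul_le_mul_of_nonneg_right (abs_dotProduct_mulVec_sub_le hG ha hb hGH)
      (sq_nonneg κ)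
    have h1 := mul_le_mul (add_le_add hA hB) hκR hκ.le (by positivity)
    have h2 := mul_le_mul hA hB (by positivity) hR0.le
    have : (κ * A + κ * B) * κ / 2 + κ * A * (κ * B) ≤ 4 * R ^ 2 := by nlinarith
    nlinarith
  have hRR : |R' - R| * R ≤ |R' ^ 2 - R ^ 2| := by
    rw [show R' ^ 2 - R ^ 2 = (R' - R) * (R' + R) by ring, abs_mul, abs_of_pos (a := R' + R) (by linarith)]
    exact mul_le_mul_of_nonneg_left (by linarith) (abs_nonneg _)
  refine le_of_mul_le_mul_right ?_ hR0
  nlinarith [mul_le_mul_of_nonneg_right hRR (sq_nonneg κ)]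

end Matrix

section Circumcentre

variable {V : Type*} [NormedAddCommGroup V] [InnerProductSpace ℝ V] {k : ℕ}

def edgeVec (p : Fin (k + 1) → V) (j : Fin k) : V := p j.succ - p 0

theorem exists_eq_sum_smul_edgeVec {p : Fin (k + 1) → V} {c : V}
    (hc : c ∈ affineSpan ℝ (Set.range p)) : ∃ a : Fin k → ℝ, c - p 0 = ∑ j, a j • edgeVec p j := by
  have hdir : c -ᵥ p 0 ∈ vectorSpan ℝ (Set.range p) := by
    rw [← direction_affineSpan]
    exact AffineSubspace.vsub_mem_direction hc (mem_affineSpan ℝ (Set.mem_range_self 0))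
  rw [vectorSpan_range_eq_span_range_vsub_right ℝ p 0,
    Submodule.mem_span_range_iff_exists_fun] at hdir
  obtain ⟨a, ha⟩ := hdir
  refine ⟨fun j => a j.succ, ?_⟩
  simpa [Fin.sum_univ_succ, edgeVec] using ha.symm

theorem Matrix.isSymm_gram {ι : Type*} (v : ι → V) : (gram ℝ v).IsSymm :=
  IsSymm.ext fun _ _ => real_inner_comm _ _

theorem dotProduct_gram_mulVec_self {ι : Type*} [Fintype ι] (v : ι → V) (x : ι → ℝ) :
    x ⬝ᵥ gram ℝ v *ᵥ x = ‖∑ i, x i • v i‖ ^ 2 := by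
  simpa [star_trivial, real_inner_self_eq_norm_sq] using star_dotProduct_gram_mulVec (𝕜 := ℝ) v x x

theorem gram_mulVec_apply {ι : Type*} [Fintype ι] (v : ι → V) (x : ι → ℝ) (i : ι) :
    (gram ℝ v *ᵥ x) i = inner ℝ (v i) (∑ j, x j • v j) := by
  simp [mulVec, dotProduct, gram_apply, inner_sum, real_inner_smul_right, mul_comm]

theorem exists_gram_mulVec_eq_half_diag {p : Fin (k + 1) → V} {c : V} {R : ℝ}
    (hc : c ∈ affineSpan ℝ (Set.range p)) (hR : ∀ i, dist c (p i) = R) :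
    ∃ a : Fin k → ℝ, gram ℝ (edgeVec p) *ᵥ a = (2 : ℝ)⁻¹ • diag (gram ℝ (edgeVec p)) ∧
      R ^ 2 = a ⬝ᵥ gram ℝ (edgeVec p) *ᵥ a := by
  obtain ⟨a, ha⟩ := exists_eq_sum_smul_edgeVec hc
  have hR0 : ‖c - p 0‖ = R := by rw [← dist_eq_norm, hR]
  refine ⟨a, funext fun i => ?_, by rw [dotProduct_gram_mulVec_self, ← ha, hR0]⟩
  have hRi : ‖(c - p 0) - edgeVec p i‖ = R := by
    rw [← hR i.succ, dist_eq_norm, edgeVec, sub_sub_sub_cancel_right]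
  have := norm_sub_sq_real (c - p 0) (edgeVec p i)
  rw [hRi, hR0] at this
  rw [gram_mulVec_apply, ← ha, Pi.smul_apply, diag_apply, gram_apply, smul_eq_mul,
    real_inner_self_eq_norm_sq, real_inner_comm]
  linarith

theorem gram_edgeVec_apply (p : Fin (k + 1) → V) (i j : Fin k) :
    gram ℝ (edgeVec p) i j = (dist (p i.succ) (p 0) ^ 2 + dist (p j.succ) (p 0) ^ 2 -
      dist (p i.succ) (p j.succ) ^ 2) / 2 := by
  have := norm_sub_sq_real (edgeVec p i) (edgeVec p j)
  rw [edgeVec, edgeVec, sub_sub_sub_cancel_right] at this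
  rw [gram_apply, dist_eq_norm, dist_eq_norm, dist_eq_norm]
  simp only [edgeVec] at this ⊢
  linarith

theorem abs_gram_edgeVec_sub_le {p q : Fin (k + 1) → V} {D : ℝ}
    (h : ∀ α β, |dist (p α) (p β) ^ 2 - dist (q α) (q β) ^ 2| ≤ D) (i j : Fin k) :
    |gram ℝ (edgeVec p) i j - gram ℝ (edgeVec q) i j| ≤ 3 / 2 * D := by
  have hi := abs_le.mp (h i.succ 0)
  have hj := abs_le.mp (h j.succ 0)
  have hij := abs_le.mp (h i.succ j.succ)
  rw [gram_edgeVec_apply, gram_edgeVec_apply, abs_le]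
  constructor <;> linarith [hi.1, hi.2, hj.1, hj.2, hij.1, hij.2]

theorem circumradius_eq_of_dist_eq {p q : Fin (k + 1) → V} {c c' : V} {R R' : ℝ}
    (hpq : ∀ α β, dist (p α) (p β) = dist (q α) (q β))
    (hc : c ∈ affineSpan ℝ (Set.range p)) (hR : ∀ i, dist c (p i) = R)
    (hc' : c' ∈ affineSpan ℝ (Set.range q)) (hR' : ∀ i, dist c' (q i) = R') : R' = R := by
  obtain ⟨a, ha, hRa⟩ := exists_gram_mulVec_eq_half_diag hc hR
  obtain ⟨b, hb, hRb⟩ := exists_gram_mulVec_eq_half_diag hc' hR'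
  have hGH := abs_gram_edgeVec_sub_le (p := p) (q := q) (D := 0) fun α β => by simp [hpq α β]
  have := abs_dotProduct_mulVec_sub_le (isSymm_gram _) ha hb hGH
  rw [mul_zero, zero_mul, abs_nonpos_iff, sub_eq_zero, ← hRa, ← hRb] at this
  exact (sq_eq_sq₀ (hR' 0 ▸ dist_nonneg) (hR 0 ▸ dist_nonneg)).mp this

end Circumcentre

section Thickness

variable {m k : ℕ}

theorem dist_le_longEdge (p : Fin (k + 1) → E m) (i j : Fin (k + 1)) :
    dist (p i) (p j) ≤ longEdge p :=
  (le_ciSup (Set.finite_range _).bddAbove j).trans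
    (le_ciSup (f := fun i => ⨆ j, dist (p i) (p j)) (Set.finite_range _).bddAbove i)

theorem longEdge_nonneg (p : Fin (k + 1) → E m) : 0 ≤ longEdge p :=
  dist_nonneg.trans (dist_le_longEdge p 0 0)

theorem longEdge_fin_one (p : Fin 1 → E m) : longEdge p = 0 :=
  le_antisymm (ciSup_le fun i => ciSup_le fun j => by rw [Subsingleton.elim (α := Fin 1) i j, dist_self])
    (longEdge_nonneg p)

theorem longEdge_le_two_mul {p : Fin (k + 1) → E m} {c : E m} {R : ℝ}
    (hR : ∀ i, dist c (p i) = R) : longEdge p ≤ 2 * R :=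
  ciSup_le fun i => ciSup_le fun j => by
    linarith [dist_triangle_left (p i) (p j) c, hR i, hR j]

theorem thickness_nonneg (p : Fin (k + 1) → E m) : 0 ≤ thickness p := by
  unfold thickness
  split_ifs
  · exact zero_le_one
  · exact div_nonneg (Real.iInf_nonneg fun i => Metric.infDist_nonneg)
      (mul_nonneg k.cast_nonneg (longEdge_nonneg p))

theorem thickness_mul_le_altitude (p : Fin (k + 1) → E m) (hk : k ≠ 0) (i : Fin (k + 1)) :
    thickness p * (k * longEdge p) ≤ altitude p i := by
  rw [thickness, if_neg hk]
  rcases eq_or_ne ((k : ℝ) * longEdge p) 0 with h0 | h0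
  · rw [h0, mul_zero]; exact Metric.infDist_nonneg
  · rw [div_mul_cancel₀ _ h0]
    exact ciInf_le (Set.finite_range _).bddBelow i

theorem thickness_le_one (p : Fin (k + 1) → E m) : thickness p ≤ 1 := by
  rcases eq_or_ne k 0 with hk | hk
  · simp [thickness, hk]
  have hk1 : (1 : ℝ) ≤ k := Nat.one_le_cast.mpr (Nat.pos_of_ne_zero hk)
  let i : Fin k := ⟨0, Nat.pos_of_ne_zero hk⟩
  rcases (longEdge_nonneg p).eq_or_lt with hL | hL
  · simp [thickness, hk, ← hL]
  have halt : altitude p i.succ ≤ longEdge p :=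
    (Metric.infDist_le_dist_of_mem
      (mem_affineSpan ℝ (Set.mem_image_of_mem p (Fin.succ_ne_zero i).symm))).trans
      (dist_le_longEdge p _ _)
  have := (thickness_mul_le_altitude p hk i.succ).trans halt
  nlinarith [mul_nonneg (mul_nonneg (thickness_nonneg p) hL.le) (sub_nonneg.mpr hk1)]

theorem abs_mul_altitude_le (p : Fin (k + 1) → E m) (a : Fin k → ℝ) (i : Fin k) :
    |a i| * altitude p i.succ ≤ ‖∑ j, a j • edgeVec p j‖ := by
  rcases eq_or_ne (a i) 0 with h0 | h0
  · simp [h0]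
  set S := affineSpan ℝ (p '' {j | j ≠ i.succ})
  have hp0 : p 0 ∈ S := mem_affineSpan ℝ (Set.mem_image_of_mem p (Fin.succ_ne_zero i).symm)
  have hedge : ∀ j ≠ i, edgeVec p j ∈ S.direction := fun j hj => by
    rw [direction_affineSpan]
    exact vsub_mem_vectorSpan ℝ (Set.mem_image_of_mem p ((Fin.succ_injective _).ne hj))
      (Set.mem_image_of_mem p (Fin.succ_ne_zero i).symm)
  set s := ∑ j, a j • edgeVec p j with hs
  have hfoot : p i.succ - (a i)⁻¹ • s ∈ S := by
    rw [← AffineSubspace.vsub_right_mem_direction_iff_mem hp0]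
    have : p i.succ - (a i)⁻¹ • s -ᵥ p 0 =
        -((a i)⁻¹ • ∑ j ∈ Finset.univ.erase i, a j • edgeVec p j) := by
      rw [hs, ← Finset.add_sum_erase _ _ (Finset.mem_univ i), smul_add, smul_smul,
        inv_mul_cancel₀ h0, one_smul, vsub_eq_sub, edgeVec]
      abel
    rw [this]
    exact Submodule.neg_mem _ (Submodule.smul_mem _ _ (Submodule.sum_mem _ fun j hj =>
      Submodule.smul_mem _ _ (hedge j (Finset.ne_of_mem_erase hj))))
  have hle : altitude p i.succ ≤ dist (p i.succ) (p i.succ - (a i)⁻¹ • s) :=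
    Metric.infDist_le_dist_of_mem hfoot
  rw [dist_eq_norm, sub_sub_cancel, norm_smul, norm_inv, Real.norm_eq_abs] at hle
  calc |a i| * altitude p i.succ ≤ |a i| * (|a i|⁻¹ * ‖s‖) :=
        mul_le_mul_of_nonneg_left hle (abs_nonneg _)
    _ = ‖s‖ := by rw [← mul_assoc, mul_inv_cancel₀ (abs_ne_zero.mpr h0), one_mul]

theorem sq_thickness_mul_longEdge_mul_le_dotProduct_gram_mulVec (p : Fin (k + 1) → E m)
    (x : Fin k → ℝ) :
    (thickness p * longEdge p * ∑ i, |x i|) ^ 2 ≤ x ⬝ᵥ gram ℝ (edgeVec p) *ᵥ x := by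
  rw [dotProduct_gram_mulVec_self]
  refine pow_le_pow_left₀ (by positivity [thickness_nonneg p, longEdge_nonneg p]) ?_ 2
  rcases eq_or_ne k 0 with rfl | hk
  · simp
  have hk0 : (0 : ℝ) < k := Nat.cast_pos.mpr (Nat.pos_of_ne_zero hk)
  refine le_of_mul_le_mul_left ?_ hk0
  calc (k : ℝ) * (thickness p * longEdge p * ∑ i, |x i|)
      = ∑ i, |x i| * (thickness p * (k * longEdge p)) := by rw [← Finset.sum_mul]; ring
    _ ≤ ∑ i, |x i| * altitude p i.succ := Finset.sum_le_sum fun i _ =>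
        mul_le_mul_of_nonneg_left (thickness_mul_le_altitude p hk i.succ) (abs_nonneg _)
    _ ≤ ∑ _i : Fin k, ‖∑ j, x j • edgeVec p j‖ :=
        Finset.sum_le_sum fun i _ => abs_mul_altitude_le p x i
    _ = k * ‖∑ j, x j • edgeVec p j‖ := by simp

end Thickness

section Distortion

variable {m k : ℕ} {p q : Fin (k + 1) → E m}

theorem abs_sq_sub_sq_le {x y L e : ℝ} (hx : 0 ≤ x) (hxL : x ≤ L) (hy : 0 ≤ y)
    (h : |x - y| ≤ e) : |x ^ 2 - y ^ 2| ≤ e * (2 * L + e) := by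
  rw [sq_sub_sq, abs_mul, abs_of_nonneg (by positivity : 0 ≤ x + y), mul_comm]
  have := (le_abs_self _).trans (abs_sub_comm x y ▸ h)
  exact mul_le_mul h (by linarith) (by positivity) ((abs_nonneg _).trans h)

theorem abs_dist_sub_dist_le_of_lt {e : ℝ}
    (h : ∀ i j, i < j → |dist (p i) (p j) - dist (q i) (q j)| ≤ e) (he : 0 ≤ e)
    (α β : Fin (k + 1)) : |dist (p α) (p β) - dist (q α) (q β)| ≤ e := by
  rcases lt_trichotomy α β with hlt | rfl | hgt
  · exact h α β hlt
  · simpa using he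
  · rw [dist_comm (p α), dist_comm (q α)]
    exact h β α hgt

theorem abs_gram_edgeVec_sub_le_of_distortion {ξ₀ : ℝ} (hξ0 : 0 ≤ ξ₀) (hξ1 : ξ₀ ≤ 1 / 16)
    (h : ∀ α β, |dist (p α) (p β) - dist (q α) (q β)| ≤ ξ₀ * longEdge p) (i j : Fin k) :
    |gram ℝ (edgeVec p) i j - gram ℝ (edgeVec q) i j| ≤ 99 / 32 * ξ₀ * longEdge p ^ 2 := by
  refine (abs_gram_edgeVec_sub_le (D := 33 / 16 * ξ₀ * longEdge p ^ 2) (fun α β => ?_) i j).trans_eq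
    (by ring)
  have := abs_sq_sub_sq_le dist_nonneg (dist_le_longEdge p α β) dist_nonneg (h α β)
  nlinarith [mul_nonneg hξ0 (sq_nonneg (longEdge p))]

end Distortion

/-- Circumradii under distortion. -/
theorem stmt7 {m k : ℕ} (p q : Fin (k+1) → E m) (ξ₀ : ℝ)
    (hξ0 : 0 ≤ ξ₀) (hξ : ξ₀ ≤ (thickness p / 4) ^ 2)
    (h : ∀ i j : Fin (k+1), i < j →
      |dist (p i) (p j) - dist (q i) (q j)| ≤ ξ₀ * longEdge p)
    (c c' : E m) (R R' : ℝ)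
    (hc : c ∈ (↑(affineSpan ℝ (Set.range p)) : Set (E m)))
    (hR : ∀ i, dist c (p i) = R)
    (hc' : c' ∈ (↑(affineSpan ℝ (Set.range q)) : Set (E m)))
    (hR' : ∀ i, dist c' (q i) = R') :
    |R' - R| ≤ 16 * Real.sqrt ((k : ℝ) ^ 3) * R * ξ₀ / thickness p ^ 3 := by
  set t := thickness p
  set L := longEdge p
  have ht0 : 0 ≤ t := thickness_nonneg p
  have ht1 : t ≤ 1 := thickness_le_one p
  have hL0 : 0 ≤ L := longEdge_nonneg p
  have hR0 : 0 ≤ R := hR 0 ▸ dist_nonneg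
  have hpq := abs_dist_sub_dist_le_of_lt h (mul_nonneg hξ0 hL0)
  rcases (mul_nonneg ht0 hL0).eq_or_lt with hκ | hκ
  · have hξL : ξ₀ * L = 0 := by
      rcases mul_eq_zero.mp hκ.symm with ht | hL
      · rw [le_antisymm (by simpa [ht] using hξ) hξ0, zero_mul]
      · rw [hL, mul_zero]
    have hR'R := circumradius_eq_of_dist_eq (fun α β => by
      simpa [hξL, sub_eq_zero] using hpq α β) hc hR hc' hR'
    rw [hR'R, sub_self, abs_zero]
    positivity
  have hL : 0 < L := pos_of_mul_pos_right hκ ht0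
  have hk : 1 ≤ (k : ℝ) := Nat.one_le_cast.mpr <| Nat.pos_of_ne_zero fun hk => by
    subst hk; exact hL.ne' (longEdge_fin_one p)
  obtain ⟨a, ha, hRa⟩ := exists_gram_mulVec_eq_half_diag hc hR
  obtain ⟨b, hb, hRb⟩ := exists_gram_mulVec_eq_half_diag hc' hR'
  have key := abs_sub_mul_sq_le_of_coercive (isSymm_gram _)
    (sq_thickness_mul_longEdge_mul_le_dotProduct_gram_mulVec p) ha hb
    (abs_gram_edgeVec_sub_le_of_distortion hξ0 (by nlinarith) hpq) (by positivity) hκ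
    (by nlinarith) hRa hRb (hR' 0 ▸ dist_nonneg)
    ((mul_le_of_le_one_left hL0 ht1).trans (longEdge_le_two_mul hR))
  have ht2 : |R' - R| * t ^ 2 ≤ 99 / 8 * ξ₀ * R :=
    le_of_mul_le_mul_right (by linarith) (pow_pos hL 2)
  have hsqrt : 1 ≤ Real.sqrt ((k : ℝ) ^ 3) := Real.one_le_sqrt.mpr (one_le_pow₀ hk)
  rw [le_div_iff₀ (pow_pos (pos_of_mul_pos_left hκ hL0) 3)]
  nlinarith [pow_le_pow_of_le_one ht0 ht1 (show 2 ≤ 3 by norm_num), abs_nonneg (R' - R),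
    mul_nonneg hξ0 hR0]
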